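/- arXiv:math/0409388 — 3 statements merged into one kernel-verified Lean document; each statement's English description precedes it below -/
import Mathlib

section
/- For all positive reals λ₁, λ₂, the polynomial 2λ₁¹⁶ - 10λ₁¹⁵λ₂ + 10λ₁¹⁴λ₂² + 42λ₁¹³λ₂³ - 135λ₁¹²λ₂⁴ + 274λ₁¹¹λ₂⁵ - 272λ₁¹⁰λ₂⁶ + 258λ₁⁹λ₂⁷ - 144λ₁⁸λ₂⁸ + 262λ₁⁷λ₂⁹ - 166λ₁⁶λ₂¹⁰ + 98λ₁⁵λ₂¹¹ + 6λ₁⁴λ₂¹² - 20λ₁³λ₂¹³ + 14λ₁²λ₂¹⁴ - 4λ₁λ₂¹⁵ + λ₂¹⁶ is nonnegative. -/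
set_option maxHeartbeats 2000000 in
theorem stmt_2 (l1 l2 : ℝ) (h1 : 0 < l1) (h2 : 0 < l2) :
    0 ≤ 2*l1^16 - 10*l1^15*l2 + 10*l1^14*l2^2 + 42*l1^13*l2^3 - 135*l1^12*l2^4
      + 274*l1^11*l2^5 - 272*l1^10*l2^6 + 258*l1^9*l2^7 - 144*l1^8*l2^8
      + 262*l1^7*l2^9 - 166*l1^6*l2^10 + 98*l1^5*l2^11 + 6*l1^4*l2^12
      - 20*l1^3*l2^13 + 14*l1^2*l2^14 - 4*l1*l2^15 + l2^16 := by
  have hc : (0:ℝ) < (l1 + l2)^23 := by positivity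
  have key : (l1 + l2)^23 * (2*l1^16 - 10*l1^15*l2 + 10*l1^14*l2^2 + 42*l1^13*l2^3 - 135*l1^12*l2^4
      + 274*l1^11*l2^5 - 272*l1^10*l2^6 + 258*l1^9*l2^7 - 144*l1^8*l2^8
      + 262*l1^7*l2^9 - 166*l1^6*l2^10 + 98*l1^5*l2^11 + 6*l1^4*l2^12
      - 20*l1^3*l2^13 + 14*l1^2*l2^14 - 4*l1*l2^15 + l2^16) =
      1*l2^39 + 19*l1*l2^38 + 175*l1^2*l2^37 + 1061*l1^3*l2^36 + 4859*l1^4*l2^35 + 18199*l1^5*l2^34 + 58507*l1^6*l2^33 + 167219*l1^7*l2^32 + 440536*l1^8*l2^31 + 1108122*l1^9*l2^30 + 2703148*l1^10*l2^29 + 6312486*l1^11*l2^28 + 13762145*l1^12*l2^27 + 27513171*l1^13*l2^26 + 50105073*l1^14*l2^25 + 83023803*l1^15*l2^24 + 124936968*l1^16*l2^23 + 169956246*l1^17*l2^22 + 207830760*l1^18*l2^21 + 227675574*l1^19*l2^20 + 223687857*l1^20*l2^19 + 198368307*l1^21*l2^18 + 160431969*l1^22*l2^17 + 119585235*l1^23*l2^16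 + 82638996*l1^24*l2^15 + 52832394*l1^25*l2^14 + 30931392*l1^26*l2^13 + 16299646*l1^27*l2^12 + 7531471*l1^28*l2^11 + 2925733*l1^29*l2^10 + 886751*l1^30*l2^9 + 178589*l1^31*l2^8 + 13483*l1^32*l2^7 + 211*l1^33*l2^6 + 4253*l1^34*l2^5 + 3361*l1^35*l2^4 + 1284*l1^36*l2^3 + 286*l1^37*l2^2 + 36*l1^38*l2 + 2*l1^39 := by ring
  have hpos : (0:ℝ) ≤ 1*l2^39 + 19*l1*l2^38 + 175*l1^2*l2^37 + 1061*l1^3*l2^36 + 4859*l1^4*l2^35 + 18199*l1^5*l2^34 + 58507*l1^6*l2^33 + 167219*l1^7*l2^32 + 440536*l1^8*l2^31 + 1108122*l1^9*l2^30 + 2703148*l1^10*l2^29 + 6312486*l1^11*l2^28 + 13762145*l1^12*l2^27 + 27513171*l1^13*l2^26 + 50105073*l1^14*l2^25 + 83023803*l1^15*l2^24 + 124936968*l1^16*l2^23 + 169956246*l1^17*l2^22 + 207830760*l1^18*l2^21 + 227675574*l1^19*l2^20 + 223687857*l1^20*l2^19 + 198368307*l1^21*l2^18 + 160431969*l1^22*l2^17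 + 119585235*l1^23*l2^16 + 82638996*l1^24*l2^15 + 52832394*l1^25*l2^14 + 30931392*l1^26*l2^13 + 16299646*l1^27*l2^12 + 7531471*l1^28*l2^11 + 2925733*l1^29*l2^10 + 886751*l1^30*l2^9 + 178589*l1^31*l2^8 + 13483*l1^32*l2^7 + 211*l1^33*l2^6 + 4253*l1^34*l2^5 + 3361*l1^35*l2^4 + 1284*l1^36*l2^3 + 286*l1^37*l2^2 + 36*l1^38*l2 + 2*l1^39 := by positivity
  exact nonneg_of_mul_nonneg_right (key ▸ hpos) hc
end

section
/- For all positive reals λ₁, λ₂, the polynomial 5λ₁⁹ - 3λ₁⁸λ₂ - 6λ₁⁷λ₂² + 26λ₁⁶λ₂³ - 20λ₁⁵λ₂⁴ + 8λ₁⁴λ₂⁵ + 6λ₁³λ₂⁶ - 2λ₁²λ₂⁷ - λ₁λ₂⁸ + 3λ₂⁹ is nonnegative. -/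
theorem stmt_7 (l1 l2 : ℝ) (h1 : 0 < l1) (h2 : 0 < l2) :
    0 ≤ 5*l1^9 - 3*l1^8*l2 - 6*l1^7*l2^2 + 26*l1^6*l2^3 - 20*l1^5*l2^4
      + 8*l1^4*l2^5 + 6*l1^3*l2^6 - 2*l1^2*l2^7 - l1*l2^8 + 3*l2^9 := by
  rcases le_total l2 l1 with h | h
  · have hs : 0 ≤ l1 - l2 := sub_nonneg.2 h
    nlinarith [mul_nonneg (pow_nonneg hs 1) (pow_nonneg h2.le 8),
      mul_nonneg (pow_nonneg hs 2) (pow_nonneg h2.le 7),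
      mul_nonneg (pow_nonneg hs 3) (pow_nonneg h2.le 6),
      mul_nonneg (pow_nonneg hs 4) (pow_nonneg h2.le 5),
      mul_nonneg (pow_nonneg hs 5) (pow_nonneg h2.le 4),
      mul_nonneg (pow_nonneg hs 6) (pow_nonneg h2.le 3),
      mul_nonneg (pow_nonneg hs 7) (pow_nonneg h2.le 2),
      mul_nonneg (pow_nonneg hs 8) (pow_nonneg h2.le 1),
      pow_nonneg hs 9, pow_nonneg h2.le 9]
  · have hs : 0 ≤ l2 - l1 := sub_nonneg.2 h
    nlinarith [mul_nonneg (pow_nonneg hs 1) (pow_nonneg h1.le 8),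
      mul_nonneg (pow_nonneg hs 2) (pow_nonneg h1.le 7),
      mul_nonneg (pow_nonneg hs 3) (pow_nonneg h1.le 6),
      mul_nonneg (pow_nonneg hs 4) (pow_nonneg h1.le 5),
      mul_nonneg (pow_nonneg hs 5) (pow_nonneg h1.le 4),
      mul_nonneg (pow_nonneg hs 6) (pow_nonneg h1.le 3),
      mul_nonneg (pow_nonneg hs 7) (pow_nonneg h1.le 2),
      mul_nonneg (pow_nonneg hs 8) (pow_nonneg h1.le 1),
      pow_nonneg hs 9, pow_nonneg h1.le 9]
end

section
/- For all real α ≤ -2 and all positive reals λ₁, λ₂, the 2×2 symmetric matrix with diagonal entries 6(λ₁²+λ₂²)λ₂²/λ₁² - 4·((α-1)/α)·λ₂⁴/λ₁² and 6(λ₁²+λ₂²)λ₁²/λ₂² - 4·((α-1)/α)·λ₁⁴/λ₂², and off-diagonal entries -4·((α-1)/α)·λ₁λ₂, is positive semidefinite. -/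
/-- The 2×2 symmetric matrix arising in the α-concavity proof for the dual
function of F = λ₁² + λ₂² is positive semidefinite for α ≤ -2, expressed as
nonnegativity of the associated quadratic form on ℝ². -/
theorem stmt_8 (α l1 l2 : ℝ) (hα : α ≤ -2) (h1 : 0 < l1) (h2 : 0 < l2) :
    ∀ x y : ℝ,
      0 ≤ (6*(l1^2 + l2^2)*l2^2/l1^2 - 4*((α - 1)/α)*l2^4/l1^2) * x^2
        + 2 * (-4*((α - 1)/α)*l1*l2) * x * y
        + (6*(l1^2 + l2^2)*l1^2/l2^2 - 4*((α - 1)/α)*l1^4/l2^2) * y^2 := by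
  intro x y
  have hα0 : α < 0 := by linarith
  set c : ℝ := (α - 1)/α with hc
  have hc2 : c ≤ 3/2 := by
    rw [hc, div_le_iff_of_neg hα0]; linarith
  have hc1 : 1 ≤ c := by
    rw [hc, le_div_iff_of_neg hα0]; linarith
  clear hc
  clear_value c
  have hl1 : l1 ≠ 0 := ne_of_gt h1
  have hl2 : l2 ≠ 0 := ne_of_gt h2
  have ht : 0 ≤ 6-4*c := by linarith
  have hP : 0 < l2^4*(6*l1^2+(6-4*c)*l2^2) := by
    apply mul_pos (by positivity)
    nlinarith [mul_nonneg ht (sq_nonneg l2), mul_pos h1 h1]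
  have key : 0 ≤ (l2^2*(6*l1^2+(6-4*c)*l2^2)*(l2^2*x) - 4*c*l1^3*l2^3*y)^2
      + (6*(6-4*c)*l1^4*l2^4*(l1^2+l2^2)^2) * y^2 := by
    have := mul_nonneg ht (by positivity : (0:ℝ) ≤ 6*l1^4*l2^4*(l1^2+l2^2)^2*y^2)
    nlinarith [sq_nonneg (l2^2*(6*l1^2+(6-4*c)*l2^2)*(l2^2*x) - 4*c*l1^3*l2^3*y), this]
  have h1' : (0:ℝ) < l1^2 := by positivity
  have h2' : (0:ℝ) < l2^2 := by positivity
  have goal2 : 0 ≤ ((6*(l1^2 + l2^2)*l2^2 - 4*c*l2^4) * x^2 * l2^2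
        + 2 * (-4*c*l1*l2) * x * y * l1^2 * l2^2
        + (6*(l1^2 + l2^2)*l1^2 - 4*c*l1^4) * y^2 * l1^2) := by
    have expand : ((6*(l1^2 + l2^2)*l2^2 - 4*c*l2^4) * x^2 * l2^2
        + 2 * (-4*c*l1*l2) * x * y * l1^2 * l2^2
        + (6*(l1^2 + l2^2)*l1^2 - 4*c*l1^4) * y^2 * l1^2) * (l2^4*(6*l1^2+(6-4*c)*l2^2))
      = (l2^2*(6*l1^2+(6-4*c)*l2^2)*(l2^2*x) - 4*c*l1^3*l2^3*y)^2
      + (6*(6-4*c)*l1^4*l2^4*(l1^2+l2^2)^2) * y^2 := by ring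
    nlinarith [key, hP, mul_pos hP hP]
  have e1 : (6*(l1^2 + l2^2)*l2^2/l1^2 - 4*c*l2^4/l1^2) * x^2
        + 2 * (-4*c*l1*l2) * x * y
        + (6*(l1^2 + l2^2)*l1^2/l2^2 - 4*c*l1^4/l2^2) * y^2
      = ((6*(l1^2 + l2^2)*l2^2 - 4*c*l2^4) * x^2 * l2^2
        + 2 * (-4*c*l1*l2) * x * y * l1^2 * l2^2
        + (6*(l1^2 + l2^2)*l1^2 - 4*c*l1^4) * y^2 * l1^2) / (l1^2*l2^2) := by
    field_simp
  rw [e1]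
  positivity
end
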